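/- Fix an integer n ≥ 2. Let u_1(p) := Σ_{k=1}^n p_k² and u_2(p) := Σ_{1≤k<l≤n} p_k² p_l², and set τ(p) := (1/(4(n−1))) (u_2(p) − ((n−2)/(2(n−1))) u_1(p)²). Then for every p ∈ ℝⁿ with all coordinates nonzero and every i ∈ {1,…,n}: Σ_{j=1}^n ((1−δ^{ij})/(p_i p_j)) · ∂τ/∂p_j (p) = p_i/(2(n−1)). That is, the vector field E^i := g^{ij} ∂_j τ defined by the cometric g^{ij}(p) = (1−δ^{ij})/(p_i p_j) equals the rescaled Euler vector field E = (1/(2(n−1))) Σ_k p_k ∂/∂p_k. -/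

import Mathlib

set_option maxRecDepth 2000


/-- Partial derivative `∂f/∂p_j` of a function of `n` real variables. -/
noncomputable def pd {n : ℕ} (j : Fin n) (f : (Fin n → ℝ) → ℝ)
    (p : Fin n → ℝ) : ℝ :=
  deriv (fun t => f (Function.update p j t)) (p j)

/-- `u_1(p) = Σ_k p_k²`. -/
def u1B (n : ℕ) (p : Fin n → ℝ) : ℝ := ∑ k : Fin n, p k ^ 2

/-- `u_2(p) = Σ_{k<l} p_k² p_l²`. -/
def u2B (n : ℕ) (p : Fin n → ℝ) : ℝ :=
  ∑ k : Fin n, ∑ l : Fin n, if k < l then p k ^ 2 * p l ^ 2 else 0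

/-- `τ(p) = (1/(4(n-1))) (u_2(p) - ((n-2)/(2(n-1))) u_1(p)²)`. -/
noncomputable def tauB (n : ℕ) (p : Fin n → ℝ) : ℝ :=
  (1 / (4 * ((n : ℝ) - 1))) *
    (u2B n p - (((n : ℝ) - 2) / (2 * ((n : ℝ) - 1))) * (u1B n p) ^ 2)

lemma u2_eq (n : ℕ) (p : Fin n → ℝ) :
    u2B n p = ((u1B n p)^2 - ∑ k : Fin n, p k ^ 4)/2 := by
  have key : (u1B n p)^2 = 2 * u2B n p + ∑ k : Fin n, p k ^ 4 := by
    rw [u1B, sq, Finset.sum_mul_sum]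
    have h : ∀ k l : Fin n, p k ^2 * p l ^2 =
        (if k < l then p k^2*p l^2 else 0) + (if l < k then p l^2*p k^2 else 0)
          + (if k = l then p k^4 else 0) := by
      intro k l
      rcases lt_trichotomy k l with h|h|h
      · rw [if_pos h, if_neg (asymm h), if_neg h.ne]; ring
      · subst h
        simp only [lt_irrefl, ite_false, ite_true, if_pos rfl]
        ring
      · rw [if_neg (asymm h), if_pos h, if_neg h.ne']; ring
    rw [Finset.sum_congr rfl (fun k _ => Finset.sum_congr rfl (fun l _ => h k l))]
    simp_rw [Finset.sum_add_distrib]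
    have h2 : ∑ k : Fin n, ∑ l : Fin n, (if l < k then p l^2*p k^2 else 0)
        = u2B n p := by
      rw [Finset.sum_comm]; rfl
    have h3 : ∑ k : Fin n, ∑ l : Fin n, (if k = l then p k^4 else 0)
        = ∑ k : Fin n, p k ^ 4 := by
      apply Finset.sum_congr rfl
      intro k _
      simp
    rw [h2, h3, u2B]; ring
  linarith

lemma update_u1 (n : ℕ) (p : Fin n → ℝ) (j : Fin n) (t : ℝ) :
    u1B n (Function.update p j t) = t^2 + (u1B n p - p j ^ 2) := by
  unfold u1B
  simp_rw [Function.apply_update (fun _ x => x^2) p j t]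
  rw [Finset.sum_update_of_mem (Finset.mem_univ j), Finset.sdiff_singleton_eq_erase,
    Finset.sum_erase_eq_sub (Finset.mem_univ j)]

lemma update_s4 (n : ℕ) (p : Fin n → ℝ) (j : Fin n) (t : ℝ) :
    ∑ k : Fin n, (Function.update p j t k) ^ 4 = t^4 + ((∑ k : Fin n, p k ^ 4) - p j ^ 4) := by
  simp_rw [Function.apply_update (fun _ x => x^4) p j t]
  rw [Finset.sum_update_of_mem (Finset.mem_univ j), Finset.sdiff_singleton_eq_erase,
    Finset.sum_erase_eq_sub (Finset.mem_univ j)]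

lemma pd_tau (n : ℕ) (p : Fin n → ℝ) (j : Fin n) :
    pd j (tauB n) p = (1/(4*((n:ℝ)-1))) * (2 * p j * u1B n p - 2 * p j ^3
      - 4 * (((n:ℝ)-2)/(2*((n:ℝ)-1))) * (p j * u1B n p)) := by
  have hfun : (fun t => tauB n (Function.update p j t)) =
      fun t : ℝ => (1/(4*((n:ℝ)-1))) *
        (((t^2 + (u1B n p - p j ^ 2))^2 - (t^4 + ((∑ k : Fin n, p k ^ 4) - p j ^ 4)))/2
          - (((n:ℝ)-2)/(2*((n:ℝ)-1))) * (t^2 + (u1B n p - p j ^ 2))^2) := by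
    funext t
    simp only [tauB]
    rw [u2_eq, update_u1, update_s4]
  rw [pd, hfun]
  have hU : HasDerivAt (fun t : ℝ => t^2 + (u1B n p - p j ^ 2)) (2 * p j) (p j) := by
    simpa using (hasDerivAt_pow 2 (p j)).add_const (u1B n p - p j ^ 2)
  have hS : HasDerivAt (fun t : ℝ => t^4 + ((∑ k : Fin n, p k ^ 4) - p j ^ 4))
      (4 * p j ^ 3) (p j) := by
    simpa using (hasDerivAt_pow 4 (p j)).add_const ((∑ k : Fin n, p k ^ 4) - p j ^ 4)
  have hU2 := hU.pow 2
  have h := ((((hU2.sub hS).div_const 2).sub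
    (hU2.const_mul (((n:ℝ)-2)/(2*((n:ℝ)-1))))).const_mul (1/(4*((n:ℝ)-1))))
  simp only [Pi.pow_apply, Pi.sub_apply] at h
  rw [h.deriv]
  have ha : p j ^ 2 + (u1B n p - p j ^ 2) = u1B n p := by ring
  rw [ha]
  push_cast
  ring

/-- the vector field `E^i = g^{ij} ∂_j τ` defined by the cometric
`g^{ij}(p) = (1-δ^{ij})/(p_i p_j)` is the rescaled Euler vector field:
`Σ_j ((1-δ^{ij})/(p_i p_j)) ∂τ/∂p_j = p_i/(2(n-1))`. -/
theorem euler_field_identity (n : ℕ) (hn : 2 ≤ n) (p : Fin n → ℝ)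
    (hp : ∀ i, p i ≠ 0) (i : Fin n) :
    ∑ j : Fin n, ((if i = j then (0 : ℝ) else 1) / (p i * p j)) * pd j (tauB n) p =
    p i / (2 * ((n : ℝ) - 1)) := by
  have h2n : (2:ℝ) ≤ (n:ℝ) := by exact_mod_cast hn
  have h1 : ((n:ℝ) - 1) ≠ 0 := by linarith
  rw [← Finset.sum_erase_add _ _ (Finset.mem_univ i)]
  have hterm : ((if i = i then (0 : ℝ) else 1) / (p i * p i)) * pd i (tauB n) p = 0 := by
    simp
  rw [hterm, add_zero]
  have hcong : ∀ j ∈ Finset.univ.erase i,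
      ((if i = j then (0 : ℝ) else 1) / (p i * p j)) * pd j (tauB n) p =
      (1/(4*((n:ℝ)-1)*p i)) * (2*u1B n p - 4*(((n:ℝ)-2)/(2*((n:ℝ)-1)))*u1B n p)
        - (1/(2*((n:ℝ)-1)*p i)) * p j ^ 2 := by
    intro j hj
    have hij : i ≠ j := (Finset.ne_of_mem_erase hj).symm
    rw [if_neg hij, pd_tau]
    field_simp [hp i, hp j, h1]
    ring
  rw [Finset.sum_congr rfl hcong, Finset.sum_sub_distrib, Finset.sum_const,
    Finset.card_erase_of_mem (Finset.mem_univ i), Finset.card_univ, Fintype.card_fin,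
    ← Finset.mul_sum, Finset.sum_erase_eq_sub (Finset.mem_univ i)]
  have hu : ∑ k : Fin n, p k ^ 2 = u1B n p := rfl
  rw [hu, nsmul_eq_mul]
  push_cast [Nat.cast_sub (le_trans one_le_two hn)]
  field_simp [hp i, h1]
  ring
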